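/- arXiv:2012.07231 — 6 statements merged into one kernel-verified Lean document; each statement's English description precedes it below -/
import Mathlib

section
/- For all n ∈ ℕ and k ∈ [1..n], the Pareto set of the OneJumpZeroJump_{n,k} function is S* = {x ∈ {0,1}^n : |x|₁ ∈ [k..n-k] ∪ {0, n}}, i.e., x is Pareto optimal (no y with f(y) ≥ f(x) componentwise and strict in one component) if and only if the number of ones of x lies in [k..n-k] ∪ {0,n}. -/
/-- Number of ones in a bit-string. -/
def ones {n : ℕ} (x : Fin n → Bool) : ℕ := (Finset.univ.filter (fun i => x i = true)).card

/-- Number of zeros in a bit-string. -/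
def zeros {n : ℕ} (x : Fin n → Bool) : ℕ := n - ones x

/-- First objective of OneJumpZeroJump. -/
def f1 (n k : ℕ) (x : Fin n → Bool) : ℕ :=
  if ones x ≤ n - k ∨ ones x = n then k + ones x else n - ones x

/-- Second objective of OneJumpZeroJump. -/
def f2 (n k : ℕ) (x : Fin n → Bool) : ℕ :=
  if zeros x ≤ n - k ∨ zeros x = n then k + zeros x else n - zeros x

/-- `x` strictly dominates `y`. -/
def dominates (n k : ℕ) (x y : Fin n → Bool) : Prop :=
  f1 n k y ≤ f1 n k x ∧ f2 n k y ≤ f2 n k x ∧ (f1 n k y < f1 n k x ∨ f2 n k y < f2 n k x)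

/-- `x` is Pareto optimal: no point dominates it. -/
def paretoOptimal (n k : ℕ) (x : Fin n → Bool) : Prop :=
  ¬ ∃ y : Fin n → Bool, dominates n k y x

lemma ones_le {n : ℕ} (x : Fin n → Bool) : ones x ≤ n := by
  simpa [ones] using (Finset.card_filter_le Finset.univ (fun i => x i = true)).trans
    (le_of_eq (Finset.card_fin n))

lemma exists_ones {n : ℕ} (t : ℕ) (ht : t < n) : ∃ y : Fin n → Bool, ones y = t := by
  refine ⟨fun i => decide (i.val < t), ?_⟩
  have : (Finset.univ.filter (fun i : Fin n => (decide (i.val < t)) = true)) =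
      Finset.Iio (⟨t, ht⟩ : Fin n) := by
    ext i
    simp [Fin.lt_def]
  simp only [ones, this, Fin.card_Iio]

lemma sum_le (n k : ℕ) (hk1 : 1 ≤ k) (hkn : k ≤ n) (h2k : 2 * k ≤ n) (y : Fin n → Bool) :
    f1 n k y + f2 n k y ≤ n + 2 * k := by
  have hy := ones_le y
  unfold f1 f2 zeros
  split_ifs <;> omega

theorem onejumpzerojump_pareto_set (n k : ℕ) (hk1 : 1 ≤ k) (hkn : k ≤ n) (h2k : 2 * k ≤ n)
    (x : Fin n → Bool) :
    paretoOptimal n k x ↔ (k ≤ ones x ∧ ones x ≤ n - k) ∨ ones x = 0 ∨ ones x = n := by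
  have hx := ones_le x
  constructor
  · intro hp
    by_contra hcon
    apply hp
    have hcase : (0 < ones x ∧ ones x < k) ∨ (n - k < ones x ∧ ones x < n) := by omega
    rcases hcase with ⟨h0, h1⟩ | ⟨h0, h1⟩
    · obtain ⟨y, hy⟩ := exists_ones (n := n) k (by omega)
      refine ⟨y, ?_⟩
      unfold dominates f1 f2 zeros
      rw [hy]
      split_ifs <;> omega
    · obtain ⟨y, hy⟩ := exists_ones (n := n) (n - k) (by omega)
      refine ⟨y, ?_⟩
      unfold dominates f1 f2 zeros
      rw [hy]
      split_ifs <;> omega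
  · rintro hset ⟨y, h1, h2, h3⟩
    have hxeq : f1 n k x + f2 n k x = n + 2 * k := by
      unfold f1 f2 zeros
      split_ifs <;> omega
    have hyle := sum_le n k hk1 hkn h2k y
    omega
end

section
/- Let n ∈ ℕ and k ∈ [1..⌊n/2⌋]. If P ⊆ {0,1}^n is a set of search points such that for all distinct x, y ∈ P, x does not weakly dominate y with respect to OneJumpZeroJump_{n,k} (i.e., f(x) is not componentwise ≥ f(y)), then |P| ≤ n - 2k + 3. -/
/-- First objective as a function of the number of ones. -/
def F1 (n k a : ℕ) : ℕ := if a ≤ n - k ∨ a = n then k + a else n - a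

/-- Second objective as a function of the number of ones. -/
def F2 (n k a : ℕ) : ℕ := if n - a ≤ n - k ∨ n - a = n then k + (n - a) else n - (n - a)

lemma f1_eq (n k : ℕ) (x : Fin n → Bool) : f1 n k x = F1 n k (ones x) := rfl

lemma f2_eq (n k : ℕ) (x : Fin n → Bool) : f2 n k x = F2 n k (ones x) := rfl

/-- Region type of a value. -/
def typ (n k a : ℕ) : ℕ := if a = 0 then 0 else if a < k then 1 else if a < n then 2 else 3

set_option maxHeartbeats 2000000 in
lemma pair_odd (n k a b : ℕ) (hk : 1 ≤ k) (h2k : 2 * k ≤ n)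
    (ha : a ≤ n) (hb : b ≤ n)
    (hma : ¬(k ≤ a ∧ a ≤ n - k)) (hmb : ¬(k ≤ b ∧ b ≤ n - k))
    (hab : a ≠ b)
    (h1 : ¬(F1 n k b ≤ F1 n k a ∧ F2 n k b ≤ F2 n k a))
    (h2 : ¬(F1 n k a ≤ F1 n k b ∧ F2 n k a ≤ F2 n k b)) :
    (typ n k a + typ n k b) % 2 = 1 := by
  simp only [F1, F2, typ] at h1 h2 ⊢
  split_ifs at h1 h2 ⊢ <;> omega

lemma mid_dom (n k c b : ℕ) (hk : 1 ≤ k) (h2k : 2 * k ≤ n)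
    (hc : k ≤ c ∧ c ≤ n - k) (hb : b ≤ n) (hbm : ¬(k ≤ b ∧ b ≤ n - k))
    (hb0 : b ≠ 0) (hbn : b ≠ n) :
    F1 n k b ≤ F1 n k c ∧ F2 n k b ≤ F2 n k c := by
  simp only [F1, F2]
  split_ifs <;> omega

lemma main_arith (n k : ℕ) (hk : 1 ≤ k) (h2k : 2 * k ≤ n) (V : Finset ℕ)
    (hVn : ∀ a ∈ V, a ≤ n)
    (nodom : ∀ a ∈ V, ∀ b ∈ V, a ≠ b → ¬(F1 n k b ≤ F1 n k a ∧ F2 n k b ≤ F2 n k a)) :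
    V.card ≤ n - 2 * k + 3 := by
  by_cases hc : ∃ c ∈ V, k ≤ c ∧ c ≤ n - k
  · obtain ⟨c, hcV, hcm⟩ := hc
    have hsub : V ⊆ insert 0 (insert n (Finset.Icc k (n - k))) := by
      intro b hbV
      simp only [Finset.mem_insert, Finset.mem_Icc]
      by_contra hb
      push_neg at hb
      obtain ⟨hb0, hbn, hbm⟩ := hb
      have hbm' : ¬(k ≤ b ∧ b ≤ n - k) := fun ⟨h1, h2⟩ => absurd h2 (Nat.lt_irrefl _ ∘ Nat.lt_of_lt_of_le (hbm h1))
      have hbne : c ≠ b := by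
        rintro rfl; exact hbm' hcm
      exact nodom c hcV b hbV hbne (mid_dom n k c b hk h2k hcm (hVn b hbV) hbm' hb0 hbn)
    have h1 := Finset.card_le_card hsub
    have h2 := Finset.card_insert_le 0 (insert n (Finset.Icc k (n - k)))
    have h3 := Finset.card_insert_le n (Finset.Icc k (n - k))
    have h4 : (Finset.Icc k (n - k)).card = n - k + 1 - k := Nat.card_Icc k (n - k)
    omega
  · push_neg at hc
    have h2 : V.card ≤ 2 := by
      by_contra h3
      push_neg at h3
      obtain ⟨a, b, c, ha, hb, hcV, hab, hac, hbc⟩ := Finset.two_lt_card_iff.mp h3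
      have p1 := pair_odd n k a b hk h2k (hVn a ha) (hVn b hb) (fun hx => by have := hc a ha hx.1; omega)
        (fun hx => by have := hc b hb hx.1; omega) hab (nodom a ha b hb hab) (nodom b hb a ha hab.symm)
      have p2 := pair_odd n k a c hk h2k (hVn a ha) (hVn c hcV) (fun hx => by have := hc a ha hx.1; omega)
        (fun hx => by have := hc c hcV hx.1; omega) hac (nodom a ha c hcV hac) (nodom c hcV a ha hac.symm)
      have p3 := pair_odd n k b c hk h2k (hVn b hb) (hVn c hcV) (fun hx => by have := hc b hb hx.1; omega)
        (fun hx => by have := hc c hcV hx.1; omega) hbc (nodom b hb c hcV hbc) (nodom c hcV b hb hbc.symm)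
      omega
    omega

theorem onejumpzerojump_population_bound (n k : ℕ) (hk1 : 1 ≤ k) (h2k : 2 * k ≤ n)
    (P : Finset (Fin n → Bool))
    (h : ∀ x ∈ P, ∀ y ∈ P, x ≠ y → ¬ (f1 n k y ≤ f1 n k x ∧ f2 n k y ≤ f2 n k x)) :
    P.card ≤ n - 2 * k + 3 := by
  have hinj : Set.InjOn ones (P : Set (Fin n → Bool)) := by
    intro x hx y hy hxy
    by_contra hne
    exact h x hx y hy hne ⟨by rw [f1_eq, f1_eq, hxy], by rw [f2_eq, f2_eq, hxy]⟩
  rw [← Finset.card_image_of_injOn hinj]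
  apply main_arith n k hk1 h2k
  · intro a ha
    obtain ⟨x, hx, rfl⟩ := Finset.mem_image.mp ha
    exact ones_le x
  · intro a ha b hb hab
    obtain ⟨x, hx, rfl⟩ := Finset.mem_image.mp ha
    obtain ⟨y, hy, rfl⟩ := Finset.mem_image.mp hb
    have hxy : x ≠ y := fun hxy => hab (by rw [hxy])
    have := h x hx y hy hxy
    rw [f1_eq, f1_eq, f2_eq, f2_eq] at this
    exact this
end

section
/- Let m, n ∈ ℕ with 0 < m < n. Then ∑_{i=1}^m (en/i)^i < (n/(n-m)) · (en/m)^m. -/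
/-!
Write `aᵢ = (e n / i) ^ i`. Since `(1 + 1/i) ^ i ≤ e`, consecutive terms satisfy
`n aᵢ ≤ (i + 1) aᵢ₊₁ ≤ m aᵢ₊₁` for `i < m`, so `aᵢ ≤ (m/n) ^ (m - i) aₘ`. The sum is therefore
at most `aₘ` times a partial geometric series of ratio `m/n < 1`, which stays below `n / (n - m)`.
-/

open Finset Real

lemma geom_sum_lt_inv_one_sub {K : Type*} [Field K] [LinearOrder K] [IsStrictOrderedRing K]
    {x : K} (h0 : 0 < x) (h1 : x < 1) (n : ℕ) : ∑ i ∈ range n, x ^ i < (1 - x)⁻¹ := by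
  rw [← one_div, lt_div_iff₀ (sub_pos.2 h1), geom_sum_mul_neg]
  linarith [pow_pos h0 n]

lemma sum_Icc_le_mul_geom_sum {R : Type*} [CommSemiring R] [PartialOrder R] [IsOrderedRing R]
    {a : ℕ → R} {r : R} {m : ℕ} (hr : 0 ≤ r) (h : ∀ i ∈ Ico 1 m, a i ≤ r * a (i + 1)) :
    ∑ i ∈ Icc 1 m, a i ≤ a m * ∑ j ∈ range m, r ^ j := by
  have hdecay : ∀ j < m, a (m - j) ≤ r ^ j * a m := by
    intro j hj
    induction j with
    | zero => simp
    | succ j ih =>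
      calc a (m - (j + 1)) ≤ r * a (m - (j + 1) + 1) := h _ (by simp; omega)
        _ = r * a (m - j) := by rw [show m - (j + 1) + 1 = m - j by omega]
        _ ≤ r * (r ^ j * a m) := mul_le_mul_of_nonneg_left (ih (by omega)) hr
        _ = r ^ (j + 1) * a m := by ring
  have hreflect : ∑ i ∈ Icc 1 m, a i = ∑ j ∈ range m, a (m - j) :=
    sum_nbij' (m - ·) (m - ·) (by simp; omega) (by simp; omega) (by simp; omega)
      (by simp; omega) (by simp; intros; congr; omega)
  rw [hreflect, mul_sum]
  exact sum_le_sum fun j hj => (hdecay j (mem_range.1 hj)).trans_eq (mul_comm _ _)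

lemma add_one_pow_le_exp_one_mul_pow (i : ℕ) : ((i : ℝ) + 1) ^ i ≤ exp 1 * (i : ℝ) ^ i := by
  rcases Nat.eq_zero_or_pos i with rfl | hi
  · simp [one_le_exp zero_le_one]
  have hiR : (0 : ℝ) < i := Nat.cast_pos.2 hi
  have h := one_add_inv_pow_le_exp (n := i)
  rwa [show 1 + (i : ℝ)⁻¹ = (i + 1) / i by field_simp, div_pow,
    div_le_iff₀ (pow_pos hiR i)] at h

lemma mul_exp_one_mul_div_pow_le (x : ℝ) (hx : 0 ≤ x) (i : ℕ) :
    x * (exp 1 * x / i) ^ i ≤ (i + 1) * (exp 1 * x / (i + 1)) ^ (i + 1) := by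
  have hii : (0 : ℝ) < (i : ℝ) ^ i := by exact_mod_cast Nat.pow_self_pos
  have hi1 : (0 : ℝ) < i + 1 := by positivity
  calc x * (exp 1 * x / i) ^ i = exp 1 * (x * (exp 1 * x) ^ i) / (exp 1 * (i : ℝ) ^ i) := by
        rw [mul_div_mul_left _ _ (exp_pos 1).ne', div_pow, mul_div_assoc]
    _ ≤ exp 1 * (x * (exp 1 * x) ^ i) / ((i : ℝ) + 1) ^ i := by
        gcongr
        exact add_one_pow_le_exp_one_mul_pow i
    _ = (i + 1) * (exp 1 * x / (i + 1)) ^ (i + 1) := by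
        rw [div_pow, pow_succ, pow_succ]
        field_simp

theorem sum_en_div_i_pow_lt (m n : ℕ) (hm : 0 < m) (hmn : m < n) :
    ∑ i ∈ Finset.Icc 1 m, (Real.exp 1 * n / i) ^ i <
      ((n : ℝ) / ((n : ℝ) - m)) * (Real.exp 1 * n / m) ^ m := by
  have hnR : (0 : ℝ) < n := by exact_mod_cast hm.trans hmn
  have hmnR : (m : ℝ) < n := by exact_mod_cast hmn
  set r : ℝ := m / n
  have hr0 : 0 < r := by positivity
  have hr1 : r < 1 := (div_lt_one hnR).2 hmnR
  have hstep : ∀ i ∈ Ico 1 m, (exp 1 * n / i) ^ i ≤ r * (exp 1 * n / ↑(i + 1)) ^ (i + 1) := by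
    intro i hi
    have him : ((i + 1 : ℕ) : ℝ) ≤ m := by exact_mod_cast (mem_Ico.1 hi).2
    rw [div_mul_eq_mul_div, le_div_iff₀ hnR, mul_comm]
    calc (n : ℝ) * (exp 1 * n / i) ^ i ≤ (i + 1) * (exp 1 * n / (i + 1)) ^ (i + 1) :=
          mul_exp_one_mul_div_pow_le n hnR.le i
      _ ≤ m * (exp 1 * n / ↑(i + 1)) ^ (i + 1) := by push_cast at him ⊢; gcongr
  calc ∑ i ∈ Icc 1 m, (exp 1 * n / i) ^ i
      ≤ (exp 1 * n / m) ^ m * ∑ j ∈ range m, r ^ j := sum_Icc_le_mul_geom_sum hr0.le hstep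
    _ < (exp 1 * n / m) ^ m * (1 - r)⁻¹ := by gcongr; exact geom_sum_lt_inv_one_sub hr0 hr1 m
    _ = (n / (n - m)) * (exp 1 * n / m) ^ m := by
        rw [one_sub_div hnR.ne', inv_div, mul_comm]
end

section
/- Let n ≥ 8 and k ∈ [4..n/2-1], and suppose the population P consists of exactly one solution for each function value (a, 2k+n-a), a ∈ [2k..n], so |P| = n-2k+1. Then the probability that one GSEMO iteration produces 0^n or 1^n satisfies ∑_{i=k}^{n-k} (1/(n-2k+1))·( n^{-i}(1-1/n)^{n-i} + n^{-(n-i)}(1-1/n)^{i} ) ≤ ((n-1)/(n-2))·(2/((n-2k+1)·n^k))·(1-1/n)^{n-k}. -/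
/-!
With `x = 1/n` and `y = 1 - 1/n`, the reflection `i ↦ n - i` of `[k, n - k]` turns the second
half of each summand into the first. Factoring out the largest term `x^k y^(n-k)` leaves a
geometric series of ratio `x / y = 1/(n-1)`, which is at most `y / (y - x) = (n-1)/(n-2)`.
-/

open Finset

theorem sum_Icc_pow_sub_mul_pow_eq {R : Type*} [CommSemiring R] (x y : R) {k n : ℕ} (hkn : 2 * k ≤ n) :
    ∑ i ∈ Icc k (n - k), x ^ (n - i) * y ^ i = ∑ i ∈ Icc k (n - k), x ^ i * y ^ (n - i) := by
  refine sum_nbij' (n - ·) (n - ·) ?_ ?_ ?_ ?_ ?_ <;> intro i hi <;> simp only [mem_Icc] at hi ⊢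
  all_goals try omega
  rw [Nat.sub_sub_self (by omega)]

section TwoVariableGeometricSum

variable {x y : ℝ}

theorem sum_range_pow_mul_pow_le (hx : 0 ≤ x) (hxy : x < y) (m : ℕ) :
    ∑ i ∈ range (m + 1), x ^ i * y ^ (m - i) ≤ y ^ (m + 1) / (y - x) := by
  rw [le_div_iff₀ (sub_pos.2 hxy)]
  have h := geom_sum₂_mul_of_le hxy.le (m + 1)
  rw [Nat.add_sub_cancel] at h
  rw [h]
  linarith [pow_nonneg hx (m + 1)]

theorem sum_Icc_pow_mul_pow_le (hx : 0 ≤ x) (hxy : x < y) {k n : ℕ} (hkn : 2 * k ≤ n) :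
    ∑ i ∈ Icc k (n - k), x ^ i * y ^ (n - i) ≤ x ^ k * y ^ (n - k) * (y / (y - x)) := by
  obtain ⟨m, rfl⟩ := Nat.exists_eq_add_of_le hkn
  have hshift : ∑ i ∈ Icc k (2 * k + m - k), x ^ i * y ^ (2 * k + m - i)
      = x ^ k * y ^ k * ∑ j ∈ range (m + 1), x ^ j * y ^ (m - j) := by
    rw [← Ico_add_one_right_eq_Icc, sum_Ico_eq_sum_range, mul_sum,
      show 2 * k + m - k + 1 - k = m + 1 by omega]
    refine sum_congr rfl fun j hj => ?_
    rw [show 2 * k + m - (k + j) = k + (m - j) by have := mem_range.1 hj; omega]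
    ring
  rw [hshift, show 2 * k + m - k = k + m by omega]
  calc x ^ k * y ^ k * ∑ j ∈ range (m + 1), x ^ j * y ^ (m - j)
      ≤ x ^ k * y ^ k * (y ^ (m + 1) / (y - x)) := by
        have hy : 0 < y := hx.trans_lt hxy
        gcongr
        exact sum_range_pow_mul_pow_le hx hxy m
    _ = x ^ k * y ^ (k + m) * (y / (y - x)) := by ring

end TwoVariableGeometricSum

theorem full_population_extremal_probability_general (n k : ℕ) (hn : 8 ≤ n)
    (hk : k ≤ n / 2 - 1) :
    ∑ i ∈ Finset.Icc k (n - k),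
        (1 / ((n : ℝ) - 2 * k + 1)) *
          ((1 / (n : ℝ)) ^ i * (1 - 1 / (n : ℝ)) ^ (n - i) +
            (1 / (n : ℝ)) ^ (n - i) * (1 - 1 / (n : ℝ)) ^ i) ≤
      (((n : ℝ) - 1) / ((n : ℝ) - 2)) * (2 / (((n : ℝ) - 2 * k + 1) * (n : ℝ) ^ k)) *
        (1 - 1 / (n : ℝ)) ^ (n - k) := by
  have h2k : 2 * k ≤ n := by omega
  have hnR : (8 : ℝ) ≤ n := by exact_mod_cast hn
  have hknR : (2 * k + 2 : ℝ) ≤ n := by exact_mod_cast (by omega : 2 * k + 2 ≤ n)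
  have hx : (0 : ℝ) ≤ 1 / n := by positivity
  have hxy : 1 / (n : ℝ) < 1 - 1 / n := by
    rw [div_lt_iff₀ (by positivity), sub_mul, one_div_mul_cancel (by positivity)]
    linarith
  have hratio : (1 - 1 / (n : ℝ)) / (1 - 1 / n - 1 / n) = (n - 1) / (n - 2) := by
    field_simp
    ring
  rw [← mul_sum, sum_add_distrib, sum_Icc_pow_sub_mul_pow_eq _ _ h2k]
  calc _ ≤ 1 / ((n : ℝ) - 2 * k + 1) * (2 * ((1 / (n : ℝ)) ^ k * (1 - 1 / (n : ℝ)) ^ (n - k) *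
          ((1 - 1 / (n : ℝ)) / (1 - 1 / n - 1 / n)))) := by
        have := sum_Icc_pow_mul_pow_le hx hxy h2k
        have hden : (0 : ℝ) < n - 2 * k + 1 := by linarith
        gcongr
        linarith
    _ = _ := by
        rw [hratio, one_div_pow]
        field_simp

theorem full_population_extremal_probability (n k : ℕ) (hn : 8 ≤ n) (hk4 : 4 ≤ k)
    (hk : k ≤ n / 2 - 1) :
    ∑ i ∈ Finset.Icc k (n - k),
        (1 / ((n : ℝ) - 2 * k + 1)) *
          ((1 / (n : ℝ)) ^ i * (1 - 1 / (n : ℝ)) ^ (n - i) +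
            (1 / (n : ℝ)) ^ (n - i) * (1 - 1 / (n : ℝ)) ^ i) ≤
      (((n : ℝ) - 1) / ((n : ℝ) - 2)) * (2 / (((n : ℝ) - 2 * k + 1) * (n : ℝ) ^ k)) *
        (1 - 1 / (n : ℝ)) ^ (n - k) :=
  full_population_extremal_probability_general n k hn hk
end

section
/- Let n ≥ 2, R ≥ n, and |P| ≥ 1. For every r ∈ [1..n/2], (1 - (1/|P|)·(1-r/n)^{n-1}·(r/n))^{⌈2|P|(en)^r ln(nR)/r^r⌉} ≤ (nR)^{-2}. -/
set_option maxHeartbeats 1000000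

open Real

/-- For `0 ≤ x ≤ 1/2`, `-x - x^2 ≤ log (1 - x)`. -/
lemma log_one_sub_ge (x : ℝ) (hx0 : 0 ≤ x) (hx2 : x ≤ 1/2) :
    -x - x ^ 2 ≤ Real.log (1 - x) := by
  have h1 : (0:ℝ) < 1 - x := by linarith
  have hexp : Real.exp (-x - x ^ 2) ≤ 1 - x := by
    have ht : (0:ℝ) ≤ x + x ^ 2 := by positivity
    have h2 : 1 + (x + x ^ 2) + (x + x ^ 2) ^ 2 / 2 ≤ Real.exp (x + x ^ 2) :=
      Real.quadratic_le_exp_of_nonneg ht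
    have h3 : 1 ≤ (1 - x) * Real.exp (x + x ^ 2) := by
      have : 1 ≤ (1 - x) * (1 + (x + x ^ 2) + (x + x ^ 2) ^ 2 / 2) := by nlinarith
      nlinarith [Real.exp_pos (x + x ^ 2)]
    have h4 : Real.exp (-x - x ^ 2) = (Real.exp (x + x ^ 2))⁻¹ := by
      rw [← Real.exp_neg]; ring_nf
    rw [h4, inv_le_iff_one_le_mul₀ (Real.exp_pos _)]
    linarith [h3]
  calc -x - x ^ 2 = Real.log (Real.exp (-x - x ^ 2)) := (Real.log_exp _).symm
    _ ≤ Real.log (1 - x) := Real.log_le_log (Real.exp_pos _) hexp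

theorem sd_neighbor_failure_probability (n R P r : ℕ) (hn : 2 ≤ n) (hR : n ≤ R)
    (hP : 1 ≤ P) (hr1 : 1 ≤ r) (hr2 : r ≤ n / 2) :
    (1 - (1 / (P : ℝ)) * (1 - (r : ℝ) / n) ^ (n - 1) * ((r : ℝ) / n)) ^
        ⌈2 * (P : ℝ) * (Real.exp 1 * n / r) ^ r * Real.log ((n : ℝ) * R)⌉₊ ≤
      1 / ((n : ℝ) * R) ^ 2 := by
  have hn0 : (0:ℝ) < n := by positivity
  have hr0 : (0:ℝ) < r := by exact_mod_cast hr1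
  have hP0 : (0:ℝ) < P := by exact_mod_cast hP
  have h2r : (2:ℝ) * r ≤ n := by
    have : r * 2 ≤ n := (Nat.le_div_iff_mul_le (by norm_num)).mp hr2
    exact_mod_cast by linarith [this]
  set x : ℝ := (r : ℝ) / n with hxdef
  have hx0 : 0 < x := by positivity
  have hx2 : x ≤ 1/2 := by
    rw [hxdef, div_le_iff₀ hn0]; linarith
  have hx1 : x < 1 := by linarith
  -- L = log (nR) > 0
  set L : ℝ := Real.log ((n : ℝ) * R) with hLdef
  have hn2 : (2:ℝ) ≤ (n:ℝ) := by exact_mod_cast hn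
  have hR2 : (2:ℝ) ≤ (R:ℝ) := by
    have : (n:ℝ) ≤ R := by exact_mod_cast hR
    linarith
  have hnR1 : (1:ℝ) < (n:ℝ) * R := by nlinarith
  have hL0 : 0 < L := Real.log_pos hnR1
  -- the key inequality: K ≥ 1
  have hcast : ((n - 1 : ℕ) : ℝ) = (n:ℝ) - 1 := by
    have : 1 ≤ n := by omega
    push_cast [this]; ring
  have hKlog : 0 ≤ Real.log x + ((n:ℝ) - 1) * Real.log (1 - x)
      + (r:ℝ) * (1 + Real.log ((n:ℝ) / r)) := by
    have hlog1 : -x - x ^ 2 ≤ Real.log (1 - x) := log_one_sub_ge x hx0.le hx2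
    have hmul : ((n:ℝ) - 1) * (-x - x ^ 2) ≤ ((n:ℝ) - 1) * Real.log (1 - x) := by
      apply mul_le_mul_of_nonneg_left hlog1
      linarith
    have hlogx : Real.log x = -Real.log ((n:ℝ) / r) := by
      rw [hxdef, ← Real.log_inv]
      congr 1
      field_simp
    have hlognr : (1:ℝ)/2 ≤ Real.log ((n:ℝ) / r) := by
      have h2le : (2:ℝ) ≤ (n:ℝ) / r := by
        rw [le_div_iff₀ hr0]; linarith
      calc (1:ℝ)/2 ≤ Real.log 2 := by
            have := Real.log_two_gt_d9; linarith
        _ ≤ Real.log ((n:ℝ)/r) := Real.log_le_log (by norm_num) h2le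
    -- key arithmetic: (r-1) * log(n/r) ≥ (r-1) * x
    have hkey : ((r:ℝ) - 1) * x ≤ ((r:ℝ) - 1) * Real.log ((n:ℝ) / r) := by
      apply mul_le_mul_of_nonneg_left _ (by linarith [(by exact_mod_cast hr1 : (1:ℝ) ≤ r)])
      linarith
    -- (n-1)(x + x²) ≤ r + r²/n - x  since x = r/n
    have harith : ((n:ℝ) - 1) * (x + x ^ 2) ≤ (r:ℝ) + (r:ℝ) * x - x := by
      have hxn : x * n = r := by rw [hxdef]; field_simp
      nlinarith [sq_nonneg x, hx0.le]
    rw [hlogx]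
    nlinarith [hmul]
  have hK : 1 ≤ x * (1 - x) ^ (n - 1) * (Real.exp 1 * n / r) ^ r := by
    have hKpos : 0 < x * (1 - x) ^ (n - 1) * (Real.exp 1 * n / r) ^ r := by
      have : (0:ℝ) < 1 - x := by linarith
      positivity
    rw [← Real.log_nonneg_iff hKpos]
    have h1xpos : (0:ℝ) < 1 - x := by linarith
    rw [Real.log_mul (by positivity : (0:ℝ) < x * (1-x)^(n-1)).ne' (by positivity),
        Real.log_mul hx0.ne' (by positivity : (0:ℝ) < (1-x) ^ (n-1)).ne',
        Real.log_pow, Real.log_pow]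
    have hlogenr : Real.log (Real.exp 1 * n / r) = 1 + Real.log ((n:ℝ) / r) := by
      rw [mul_div_assoc, Real.log_mul (Real.exp_pos 1).ne' (by positivity), Real.log_exp]
    rw [hlogenr, hcast]
    linarith [hKlog]
  -- now the main estimate
  set p : ℝ := (1 / (P : ℝ)) * (1 - x) ^ (n - 1) * x with hpdef
  have h1x : (0:ℝ) ≤ 1 - x := by linarith
  have hp0 : 0 ≤ p := by positivity
  have hp1 : p ≤ 1 := by
    have h1 : (1:ℝ) / P ≤ 1 := by
      rw [div_le_one hP0]; exact_mod_cast hP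
    have h2 : (1 - x) ^ (n - 1) ≤ 1 :=
      pow_le_one₀ h1x (by linarith)
    have := mul_le_one₀ (mul_le_one₀ h1 (by positivity) h2) hx0.le (le_of_lt hx1)
    simpa [hpdef] using this
  set T : ℕ := ⌈2 * (P : ℝ) * (Real.exp 1 * n / r) ^ r * L⌉₊ with hTdef
  have hT : 2 * (P : ℝ) * (Real.exp 1 * n / r) ^ r * L ≤ (T : ℝ) := Nat.le_ceil _
  have hpT : 2 * L ≤ p * T := by
    have hstep : 2 * L ≤ p * (2 * (P : ℝ) * (Real.exp 1 * n / r) ^ r * L) := by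
      have : p * (2 * (P : ℝ) * (Real.exp 1 * n / r) ^ r * L)
          = 2 * L * (x * (1 - x) ^ (n - 1) * (Real.exp 1 * n / r) ^ r) := by
        rw [hpdef]; field_simp
      rw [this]
      nlinarith [hK, hL0]
    calc 2 * L ≤ p * (2 * (P : ℝ) * (Real.exp 1 * n / r) ^ r * L) := hstep
      _ ≤ p * T := mul_le_mul_of_nonneg_left hT hp0
  calc (1 - p) ^ T ≤ Real.exp (-p) ^ T := by
        apply pow_le_pow_left₀ (by linarith) _ T
        linarith [Real.add_one_le_exp (-p)]
    _ = Real.exp (-(p * T)) := by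
        rw [← Real.exp_nat_mul]; ring_nf
    _ ≤ Real.exp (-(2 * L)) := by
        apply Real.exp_le_exp.mpr; linarith
    _ = 1 / ((n : ℝ) * R) ^ 2 := by
        have hnR0 : (0:ℝ) < (n:ℝ) * R := by linarith
        rw [show -(2*L) = -L + -L by ring, Real.exp_add, Real.exp_neg,
            Real.exp_log hnR0]
        field_simp
end

section
/- For all n ≥ 2 and r ∈ [1..n/2], (r/n)·(1 - r/n)^{n-1}·(en/r)^r ≥ 1. -/
/-!
Put `x = r / n ∈ (0, 1/2]`, so that the product equals `x / (1 - x) · gʳ` with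
`g = e (1 - x)^{1/x} / x`. Concavity of `log` gives `(1 - x)^{1/x} ≥ 1/4`, hence `g ≥ e / 2 > 1` and
the product is at least `x / (1 - x) · g = e (1 - x)^{(1 - x)/x}`, which is `≥ 1` by
`log y ≥ 1 - 1/y` at `y = 1 - x`. Everything is done on the logarithmic scale.
-/

open Real

lemma neg_one_le_one_sub_div_mul_log_one_sub {x : ℝ} (hx0 : 0 < x) (hx1 : x < 1) :
    -1 ≤ (1 - x) / x * log (1 - x) := by
  have hx1' : 0 < 1 - x := sub_pos.2 hx1
  have hlog := one_sub_inv_le_log_of_pos hx1'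
  calc -1 = (1 - x) / x * (1 - (1 - x)⁻¹) := by field_simp; ring
    _ ≤ (1 - x) / x * log (1 - x) := by gcongr

lemma neg_two_mul_log_two_mul_le_log_one_sub {x : ℝ} (hx0 : 0 ≤ x) (hx : x ≤ 1 / 2) :
    -(2 * log 2 * x) ≤ log (1 - x) := by
  have h := strictConcaveOn_log_Ioi.concaveOn.2 (show (1 / 2 : ℝ) ∈ Set.Ioi 0 by norm_num)
    (show (1 : ℝ) ∈ Set.Ioi 0 by norm_num) (by positivity : 0 ≤ 2 * x) (by linarith : 0 ≤ 1 - 2 * x)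
    (by ring)
  rw [smul_eq_mul, smul_eq_mul, smul_eq_mul, smul_eq_mul, one_div, log_inv, log_one] at h
  calc -(2 * log 2 * x) = 2 * x * -log 2 + (1 - 2 * x) * 0 := by ring
    _ ≤ log (2 * x * 2⁻¹ + (1 - 2 * x) * 1) := h
    _ = log (1 - x) := by ring_nf

lemma log_one_sub_div_add_one_sub_log_nonneg {x : ℝ} (hx0 : 0 < x) (hx : x ≤ 1 / 2) :
    0 ≤ log (1 - x) / x + 1 - log x := by
  have hchord : -(2 * log 2) ≤ log (1 - x) / x := by
    rw [le_div_iff₀ hx0]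
    linarith [neg_two_mul_log_two_mul_le_log_one_sub hx0.le hx]
  have hlog : log x ≤ -log 2 := by
    simpa [one_div, log_inv] using log_le_log hx0 hx
  have hlog2 : log 2 ≤ 1 := by linarith [log_le_sub_one_of_pos (zero_lt_two : (0 : ℝ) < 2)]
  linarith

-- The logarithm of the product in the theorem, written in `x = r / n` and `r`.
lemma log_rate_success_product_nonneg {x r : ℝ} (hx0 : 0 < x) (hx : x ≤ 1 / 2)
    (hr : 1 ≤ r) : 0 ≤ log x + (r / x - 1) * log (1 - x) + r * (1 - log x) := by
  have hL := log_one_sub_div_add_one_sub_log_nonneg hx0 hx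
  have hK := neg_one_le_one_sub_div_mul_log_one_sub hx0 (by linarith)
  have hsplit : log x + (r / x - 1) * log (1 - x) + r * (1 - log x)
      = (r - 1) * (log (1 - x) / x + 1 - log x) + ((1 - x) / x * log (1 - x) + 1) := by
    field_simp; ring
  rw [hsplit]
  have := mul_nonneg (sub_nonneg.2 hr) hL
  linarith

theorem rate_success_product_ge_one_general (n r : ℕ) (hr1 : 1 ≤ r) (hr2 : r ≤ n / 2) :
    1 ≤ ((r : ℝ) / n) * (1 - (r : ℝ) / n) ^ (n - 1) * (Real.exp 1 * n / r) ^ r := by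
  have hn0 : (0 : ℝ) < n := by exact_mod_cast (by omega : 0 < n)
  have hr0 : (0 : ℝ) < r := by exact_mod_cast hr1
  have hx0 : (0 : ℝ) < r / n := by positivity
  have hx : (r : ℝ) / n ≤ 1 / 2 := by
    rw [div_le_div_iff₀ hn0 two_pos]
    exact_mod_cast (by omega : r * 2 ≤ 1 * n)
  have hbase : Real.exp 1 * n / r = Real.exp 1 / (r / n) := by field_simp
  have hexp : (n : ℝ) - 1 = r / (r / n) - 1 := by field_simp
  have hx1 : 0 < 1 - (r : ℝ) / n := by linarith
  rw [← log_nonneg_iff (by positivity),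
    log_mul (by positivity) (by positivity), log_mul hx0.ne' (by positivity), log_pow, log_pow,
    hbase, log_div (exp_ne_zero 1) hx0.ne', log_exp, Nat.cast_sub (by omega : 1 ≤ n),
    Nat.cast_one, hexp]
  exact log_rate_success_product_nonneg hx0 hx (by exact_mod_cast hr1)

theorem rate_success_product_ge_one (n r : ℕ) (hn : 2 ≤ n) (hr1 : 1 ≤ r) (hr2 : r ≤ n / 2) :
    1 ≤ ((r : ℝ) / n) * (1 - (r : ℝ) / n) ^ (n - 1) * (Real.exp 1 * n / r) ^ r :=
  rate_success_product_ge_one_general n r hr1 hr2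
end
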